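/- Let S_A be the additive subsemigroup of ℤ⁴ generated by 𝒢₂ = {g₁, g₂, g₃, g₄, g₅, g₆, g₇, g₃−g₁, g₆−g₁, g₃−g₂, g₅−g₄, g₆−g₄, g₆−g₇}, and let R be the additive subsemigroup of ℤ⁴ generated by H₂ = {g₂, g₄, g₃−g₂, g₃−g₁, g₆−g₁, g₆−g₇, (1,0,1,0)}. Then S_A ⊆ R, and R is contained in the saturation of S_A, i.e., for every x ∈ R there is a positive integer n with n·x ∈ S_A; in particular 2·(1,0,1,0) = (g₃−g₂) + g₁ ∈ S_A. -/

import Mathlib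

/-- The seven lattice points `g₁, …, g₇` (0-indexed as `g 0, …, g 6`). -/
def g : Fin 7 → (Fin 4 → ℤ) :=
  ![![1,0,0,0], ![0,1,0,0], ![1,1,2,0], ![0,0,0,1],
    ![0,2,2,1], ![1,1,1,0], ![0,1,1,1]]

/-- The generating set `𝒢₂`. -/
def G₂ : Set (Fin 4 → ℤ) :=
  {g 0, g 1, g 2, g 3, g 4, g 5, g 6,
   g 2 - g 0, g 5 - g 0, g 2 - g 1, g 4 - g 3, g 5 - g 3, g 5 - g 6}

/-- The generating set `H₂`. -/
def H₂ : Set (Fin 4 → ℤ) :=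
  {g 1, g 3, g 2 - g 1, g 2 - g 0, g 5 - g 0, g 5 - g 6, ![1,0,1,0]}

/-- The subsemigroup `S_A` of `ℤ⁴` generated by `𝒢₂`. -/
def SA : AddSubmonoid (Fin 4 → ℤ) := AddSubmonoid.closure G₂

/-- The subsemigroup `R` of `ℤ⁴` generated by `H₂`. -/
def R : AddSubmonoid (Fin 4 → ℤ) := AddSubmonoid.closure H₂

/-! Each generator of `𝒢₂` is a sum of at most three elements of `H₂`. Conversely every element
of `H₂` except `(1,0,1,0)` already lies in `𝒢₂`, and `2 • (1,0,1,0) = (g₃ - g₂) + g₁` lies in `S_A`;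
since the elements with a positive multiple in `S_A` form a submonoid, this gives `R` inside it. -/

namespace AddSubmonoid

variable {M : Type*} [AddCommMonoid M]

def nsmulSaturation (S : AddSubmonoid M) : AddSubmonoid M where
  carrier := {x | ∃ n : ℕ, 0 < n ∧ n • x ∈ S}
  zero_mem' := ⟨1, one_pos, by simp⟩
  add_mem' := by
    rintro a b ⟨n, hn, ha⟩ ⟨m, hm, hb⟩
    refine ⟨m * n, Nat.mul_pos hm hn, ?_⟩
    rw [smul_add, mul_smul, mul_comm, mul_smul]
    exact add_mem (nsmul_mem ha m) (nsmul_mem hb n)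

theorem mem_nsmulSaturation {S : AddSubmonoid M} {x : M} :
    x ∈ S.nsmulSaturation ↔ ∃ n : ℕ, 0 < n ∧ n • x ∈ S :=
  Iff.rfl

theorem le_nsmulSaturation (S : AddSubmonoid M) : S ≤ S.nsmulSaturation :=
  fun x hx => ⟨1, one_pos, by simpa using hx⟩

end AddSubmonoid

theorem two_smul_eq_g : (2 : ℕ) • (![1,0,1,0] : Fin 4 → ℤ) = (g 2 - g 1) + g 0 := by
  decide

theorem g_sub_add_g_mem_SA : (g 2 - g 1) + g 0 ∈ SA :=
  add_mem (AddSubmonoid.subset_closure (by simp [G₂]))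
    (AddSubmonoid.subset_closure (by simp [G₂]))

theorem SA_le_R : SA ≤ R := by
  have mem : ∀ {x}, x ∈ H₂ → x ∈ R := fun hx => AddSubmonoid.subset_closure hx
  have mem_add : ∀ {x y}, x ∈ H₂ → y ∈ H₂ → x + y ∈ R := fun hx hy => add_mem (mem hx) (mem hy)
  rw [SA, AddSubmonoid.closure_le]
  simp only [G₂, Set.insert_subset_iff, Set.singleton_subset_iff, SetLike.mem_coe]
  refine ⟨?g₁, mem (by simp [H₂]), ?g₃, mem (by simp [H₂]), ?g₅, ?g₆, ?g₇,
    mem (by simp [H₂]), mem (by simp [H₂]), mem (by simp [H₂]), ?g₅_sub_g₄, ?g₆_sub_g₄,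
    mem (by simp [H₂])⟩
  case g₁ =>
    rw [show g 0 = (g 5 - g 6) + g 3 by decide]
    exact mem_add (by simp [H₂]) (by simp [H₂])
  case g₃ =>
    rw [show g 2 = (g 2 - g 1) + g 1 by decide]
    exact mem_add (by simp [H₂]) (by simp [H₂])
  case g₅ =>
    rw [show g 4 = g 3 + ((g 5 - g 0) + (g 5 - g 0)) by decide]
    exact add_mem (mem (by simp [H₂])) (mem_add (by simp [H₂]) (by simp [H₂]))
  case g₆ =>
    rw [show g 5 = ![1,0,1,0] + g 1 by decide]
    exact mem_add (by simp [H₂]) (by simp [H₂])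
  case g₇ =>
    rw [show g 6 = (g 5 - g 0) + g 3 by decide]
    exact mem_add (by simp [H₂]) (by simp [H₂])
  case g₅_sub_g₄ =>
    rw [show g 4 - g 3 = (g 5 - g 0) + (g 5 - g 0) by decide]
    exact mem_add (by simp [H₂]) (by simp [H₂])
  case g₆_sub_g₄ =>
    rw [show g 5 - g 3 = (g 5 - g 6) + (g 5 - g 0) by decide]
    exact mem_add (by simp [H₂]) (by simp [H₂])

theorem R_le_nsmulSaturation_SA : R ≤ SA.nsmulSaturation := by
  have mem : ∀ {x}, x ∈ G₂ → x ∈ SA.nsmulSaturation :=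
    fun hx => SA.le_nsmulSaturation (AddSubmonoid.subset_closure hx)
  rw [R, AddSubmonoid.closure_le]
  simp only [H₂, Set.insert_subset_iff, Set.singleton_subset_iff, SetLike.mem_coe]
  exact ⟨mem (by simp [G₂]), mem (by simp [G₂]), mem (by simp [G₂]), mem (by simp [G₂]),
    mem (by simp [G₂]), mem (by simp [G₂]),
    ⟨2, two_pos, two_smul_eq_g ▸ g_sub_add_g_mem_SA⟩⟩

/-- `S_A ⊆ R`, and `R` is contained in the saturation of `S_A`; in particular
`2·(1,0,1,0) = (g₃ − g₂) + g₁ ∈ S_A`. -/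
theorem stmt_11 :
    SA ≤ R ∧
    (∀ x ∈ R, ∃ n : ℕ, 0 < n ∧ n • x ∈ SA) ∧
    (2 : ℕ) • (![1,0,1,0] : Fin 4 → ℤ) = (g 2 - g 1) + g 0 ∧
    (g 2 - g 1) + g 0 ∈ SA :=
  ⟨SA_le_R, fun _ hx => AddSubmonoid.mem_nsmulSaturation.1 (R_le_nsmulSaturation_SA hx),
    two_smul_eq_g, g_sub_add_g_mem_SA⟩
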